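/- Let L be a frame and {(a_i,b_i)}_{i∈I} ⊆ LC(L). Then the family {(a_i,b_i)} is admissible in the join-semilattice LC(L) (its meet exists and distributes over binary joins) if and only if it is locally exact, i.e., the sublocale ⋁_{i∈I} c(a_i) ∩ o(b_i) is locally closed. -/
import Mathlib


open Set

variable {L : Type*} [Order.Frame L]

/-- The open sublocale determined by `a`. -/
def Opn (a : L) : Set L := Set.range (a ⇨ ·)

/-- A sublocale: a subset closed under all meets and under `a ⇨ (-)`. -/
def IsSublocale (S : Set L) : Prop :=
  (∀ T ⊆ S, sInf T ∈ S) ∧ ∀ a : L, ∀ s ∈ S, a ⇨ s ∈ S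

/-- Join of two sublocales in the coframe of sublocales. -/
def SJoin2 (S T : Set L) : Set L := {x | ∃ M ⊆ S ∪ T, sInf M = x}

/-- The supplement (co-pseudocomplement) of a sublocale: the least sublocale `T`
with `S ∨ T = L`. -/
def Supp (S : Set L) : Set L := ⋂₀ {T | IsSublocale T ∧ SJoin2 S T = Set.univ}

/-- The frame surjection onto a sublocale. -/
def nu (T : Set L) (a : L) : L := sInf {t ∈ T | a ≤ t}

/-- Canonical representations of locally closed sublocales. -/
def LCset (L : Type*) [Order.Frame L] : Set (L × L) :=
  {p | p.1 ≤ p.2 ∧ p.2 ⇨ p.1 = p.1}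

/-- The canonical-representation map `lc`. -/
def lc (p : L × L) : L × L := (p.2 ⇨ p.1, (p.2 ⇨ p.1) ⊔ p.2)

/-- The order on `LCset L`: `(x,y) ⊑ (a,b)` iff `x ≤ a` and `b ≤ a ∨ y`. -/
def LCle (p q : L × L) : Prop := p.1 ≤ q.1 ∧ q.2 ≤ q.1 ⊔ p.2

/-- The join in `LCset L`. -/
def lcSup (p q : L × L) : L × L := lc (p.1 ⊔ q.1, p.2 ⊓ q.2)

/-- The join in the coframe of sublocales of a family of locally closed sublocales. -/
def SJoinP (U : Set (L × L)) : Set L :=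
  {x | ∃ M ⊆ ⋃ p ∈ U, Set.Ici p.1 ∩ Opn p.2, sInf M = x}

/-- `m` is the greatest lower bound of `F` in the poset `(LCset L, LCle)`. -/
def lcIsGLB (F : Set (L × L)) (m : L × L) : Prop :=
  m ∈ LCset L ∧ (∀ p ∈ F, LCle m p) ∧
    ∀ q ∈ LCset L, (∀ p ∈ F, LCle q p) → LCle q m

/-- `F` is an admissible family in the join-semilattice `LCset L`, with meet `m`:
the meet exists and distributes over binary joins. -/
def lcAdmissible (F : Set (L × L)) (m : L × L) : Prop :=
  lcIsGLB F m ∧ ∀ b ∈ LCset L, lcIsGLB ((fun p => lcSup b p) '' F) (lcSup b m)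

section Aux
variable {L : Type*} [Order.Frame L]

/-- The locally closed set determined by a pair. -/
def Sl (p : L × L) : Set L := Set.Ici p.1 ∩ Opn p.2

lemma mem_Opn_iff {b x : L} : x ∈ Opn b ↔ b ⇨ x = x := by
  constructor
  · rintro ⟨y, rfl⟩
    show b ⇨ (b ⇨ y) = b ⇨ y
    rw [himp_himp, inf_idem]
  · intro h; exact ⟨x, h⟩

lemma mem_Sl_iff {p : L × L} {x : L} : x ∈ Sl p ↔ p.1 ≤ x ∧ p.2 ⇨ x = x := by
  simp [Sl, mem_Opn_iff, Set.mem_Ici]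

lemma himp_sInf_eq (v : L) (M : Set L) : v ⇨ sInf M = sInf ((v ⇨ ·) '' M) := by
  apply le_antisymm
  · apply le_sInf; rintro _ ⟨m, hm, rfl⟩
    exact himp_le_himp_left (sInf_le hm)
  · rw [le_himp_iff]
    apply le_sInf; intro m hm
    rw [← le_himp_iff]
    exact sInf_le ⟨m, hm, rfl⟩

lemma sInf_mem_Sl {p : L × L} {M : Set L} (h : M ⊆ Sl p) : sInf M ∈ Sl p := by
  rw [mem_Sl_iff]
  refine ⟨le_sInf fun m hm => (mem_Sl_iff.1 (h hm)).1, le_antisymm ?_ le_himp⟩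
  apply le_sInf; intro m hm
  calc p.2 ⇨ sInf M ≤ p.2 ⇨ m := himp_le_himp_left (sInf_le hm)
    _ = m := (mem_Sl_iff.1 (h hm)).2

lemma lc_mem_LCset (p : L × L) : lc p ∈ LCset L := by
  obtain ⟨x, y⟩ := p
  refine ⟨le_sup_left, ?_⟩
  show ((y ⇨ x) ⊔ y) ⇨ (y ⇨ x) = y ⇨ x
  rw [sup_himp_distrib, himp_self, top_inf_eq, himp_himp, inf_idem]

/-- Canonicalization: `Sl (lc p) = Sl p`. -/
lemma Sl_lc (p : L × L) : Sl (lc p) = Sl p := by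
  obtain ⟨x, y⟩ := p
  ext t
  simp only [mem_Sl_iff, lc]
  constructor
  · rintro ⟨h1, h2⟩
    refine ⟨le_trans le_himp h1, le_antisymm ?_ le_himp⟩
    have key : (y ⇨ t) ⊓ ((y ⇨ x) ⊔ y) ≤ t := by
      rw [inf_sup_left]
      exact sup_le (inf_le_right.trans h1) himp_inf_le
    calc y ⇨ t ≤ ((y ⇨ x) ⊔ y) ⇨ t := le_himp_iff.2 key
      _ = t := h2
  · rintro ⟨h1, h2⟩
    refine ⟨(himp_le_himp_left h1).trans_eq h2, ?_⟩
    show ((y ⇨ x) ⊔ y) ⇨ t = t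
    rw [sup_himp_distrib, himp_eq_top_iff.2 ((himp_le_himp_left h1).trans_eq h2),
      top_inf_eq, h2]

lemma subset_of_LCle {p q : L × L} (h : LCle p q) : Sl q ⊆ Sl p := by
  intro t ht
  rw [mem_Sl_iff] at ht ⊢
  obtain ⟨h1, h2⟩ := ht
  refine ⟨le_trans h.1 h1, le_antisymm ?_ le_himp⟩
  have key : (p.2 ⇨ t) ⊓ q.2 ≤ t := by
    calc (p.2 ⇨ t) ⊓ q.2 ≤ (p.2 ⇨ t) ⊓ (q.1 ⊔ p.2) := inf_le_inf_left _ h.2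
      _ ≤ t := by
        rw [inf_sup_left]
        exact sup_le (inf_le_right.trans h1) himp_inf_le
  calc p.2 ⇨ t ≤ q.2 ⇨ t := le_himp_iff.2 key
    _ = t := h2

lemma LCle_of_subset {p q : L × L} (hq : q.2 ⇨ q.1 = q.1) (h : Sl q ⊆ Sl p) :
    LCle p q := by
  have hq1 : q.1 ∈ Sl q := mem_Sl_iff.2 ⟨le_rfl, hq⟩
  refine ⟨(mem_Sl_iff.1 (h hq1)).1, ?_⟩
  -- use the element q.2 ⇨ (q.1 ⊔ p.2) ∈ Sl q
  have hmem : q.2 ⇨ (q.1 ⊔ p.2) ∈ Sl q := by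
    rw [mem_Sl_iff]
    refine ⟨?_, by rw [himp_himp, inf_idem]⟩
    calc q.1 = q.2 ⇨ q.1 := hq.symm
      _ ≤ q.2 ⇨ (q.1 ⊔ p.2) := himp_le_himp_left le_sup_left
  have hfix := (mem_Sl_iff.1 (h hmem)).2
  have htop : p.2 ≤ q.2 ⇨ (q.1 ⊔ p.2) := le_himp_iff.2 (inf_le_left.trans le_sup_right)
  have : q.2 ⇨ (q.1 ⊔ p.2) = ⊤ := by
    rw [← hfix]
    exact himp_eq_top_iff.2 htop
  exact himp_eq_top_iff.1 this

lemma Sl_lcSup (p q : L × L) : Sl (lcSup p q) = Sl p ∩ Sl q := by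
  rw [lcSup, Sl_lc]
  ext t
  simp only [Set.mem_inter_iff, mem_Sl_iff, sup_le_iff]
  constructor
  · rintro ⟨⟨h1, h2⟩, h3⟩
    constructor
    · refine ⟨h1, le_antisymm ?_ le_himp⟩
      calc p.2 ⇨ t ≤ p.2 ⊓ q.2 ⇨ t := himp_le_himp_right inf_le_left
        _ = t := h3
    · refine ⟨h2, le_antisymm ?_ le_himp⟩
      calc q.2 ⇨ t ≤ p.2 ⊓ q.2 ⇨ t := himp_le_himp_right inf_le_right
        _ = t := h3
  · rintro ⟨⟨h1, h2⟩, ⟨h3, h4⟩⟩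
    refine ⟨⟨h1, h3⟩, ?_⟩
    show p.2 ⊓ q.2 ⇨ t = t
    rw [← himp_himp, h4, h2]

lemma biUnion_Sl (F : Set (L × L)) :
    (⋃ p ∈ F, Set.Ici p.1 ∩ Opn p.2) = ⋃ p ∈ F, Sl p := rfl

lemma mem_SJoinP_iff {F : Set (L × L)} {x : L} :
    x ∈ SJoinP F ↔ sInf {m | m ∈ (⋃ p ∈ F, Sl p) ∧ x ≤ m} ≤ x := by
  constructor
  · rintro ⟨M, hM, rfl⟩
    exact sInf_le_sInf fun m hm => ⟨hM hm, sInf_le hm⟩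
  · intro h
    exact ⟨{m | m ∈ (⋃ p ∈ F, Sl p) ∧ x ≤ m}, fun m hm => hm.1,
      le_antisymm h (le_sInf fun m hm => hm.2)⟩

lemma Sl_subset_SJoinP {F : Set (L × L)} {p : L × L} (hp : p ∈ F) :
    Sl p ⊆ SJoinP F := by
  intro t ht
  exact ⟨{t}, by simp only [Set.singleton_subset_iff]; exact Set.mem_biUnion hp ht,
    sInf_singleton⟩

lemma sInf_mem_SJoinP {F : Set (L × L)} {T : Set L} (h : T ⊆ SJoinP F) :
    sInf T ∈ SJoinP F := by
  rw [mem_SJoinP_iff]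
  apply le_sInf
  intro t ht
  calc sInf {m | m ∈ (⋃ p ∈ F, Sl p) ∧ sInf T ≤ m}
      ≤ sInf {m | m ∈ (⋃ p ∈ F, Sl p) ∧ t ≤ m} :=
        sInf_le_sInf fun m hm => ⟨hm.1, (sInf_le ht).trans hm.2⟩
    _ ≤ t := mem_SJoinP_iff.1 (h ht)

lemma SJoinP_subset_Sl {F : Set (L × L)} {q : L × L}
    (h : ∀ p ∈ F, Sl p ⊆ Sl q) : SJoinP F ⊆ Sl q := by
  rintro x ⟨M, hM, rfl⟩
  apply sInf_mem_Sl
  intro m hm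
  obtain ⟨p, hp, hmp⟩ := Set.mem_iUnion₂.1 (hM hm)
  exact h p hp hmp

end Aux

theorem stmt_16 (F : Set (L × L)) (hF : F ⊆ LCset L) :
    (∃ m : L × L, lcAdmissible F m) ↔
      ∃ x y : L, SJoinP F = Set.Ici x ∩ Opn y := by
  constructor
  · -- admissible → locally closed
    rintro ⟨m, ⟨⟨hmLC, hmlb, hmglb⟩, hdist⟩⟩
    refine ⟨m.1, m.2, ?_⟩
    have hJm : SJoinP F ⊆ Sl m :=
      SJoinP_subset_Sl fun p hp => subset_of_LCle (hmlb p hp)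
    apply Set.Subset.antisymm hJm
    show Sl m ⊆ SJoinP F
    intro t ht
    set r := sInf {s | s ∈ SJoinP F ∧ t ≤ s} with hr
    have htr : t ≤ r := le_sInf fun s hs => hs.2
    have hrJ : r ∈ SJoinP F := sInf_mem_SJoinP fun s hs => hs.1
    have hrle : ∀ z ∈ SJoinP F, t ≤ z → r ≤ z := fun z hz htz => sInf_le ⟨hz, htz⟩
    have hb : ((t, ⊤) : L × L) ∈ LCset L := ⟨le_top, top_himp⟩
    obtain ⟨-, hlb, hglb⟩ := hdist (t, ⊤) hb
    set q := lc ((r, m.2) : L × L) with hqdef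
    have hqLC := lc_mem_LCset ((r, m.2) : L × L)
    have hrm : r ∈ Sl m := hJm hrJ
    have hq1 : q.1 = r := (mem_Sl_iff.1 hrm).2
    have hSq : Sl q = Sl ((r, m.2) : L × L) := Sl_lc _
    have hlbq : ∀ p' ∈ (fun p => lcSup (t, ⊤) p) '' F, LCle q p' := by
      rintro _ ⟨p, hp, rfl⟩
      apply LCle_of_subset (lc_mem_LCset _).2
      have hss : Sl (lcSup ((t, ⊤) : L × L) p) ⊆ Sl ((r, m.2) : L × L) := by
        rw [Sl_lcSup]
        rintro z ⟨hz1, hz2⟩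
        have htz : t ≤ z := (mem_Sl_iff.1 hz1).1
        have hzJ : z ∈ SJoinP F := Sl_subset_SJoinP hp hz2
        rw [mem_Sl_iff]
        exact ⟨hrle z hzJ htz, (mem_Sl_iff.1 (hJm hzJ)).2⟩
      exact hSq ▸ hss
    have hle := (hglb q hqLC hlbq).1
    have hcomp : (lcSup ((t, ⊤) : L × L) m).1 = t := by
      show ((⊤ : L) ⊓ m.2) ⇨ (t ⊔ m.1) = t
      rw [top_inf_eq, sup_eq_left.2 (mem_Sl_iff.1 ht).1, (mem_Sl_iff.1 ht).2]
    rw [hq1, hcomp] at hle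
    have : t = r := le_antisymm htr hle
    rw [this]
    exact hrJ
  · -- locally closed → admissible
    rintro ⟨x, y, hJ⟩
    set m := lc ((x, y) : L × L) with hm
    have hmLC := lc_mem_LCset ((x, y) : L × L)
    have hSm : Sl m = SJoinP F := by
      rw [hm, Sl_lc]
      exact hJ.symm
    have hsub : ∀ p ∈ F, Sl p ⊆ Sl m := fun p hp => hSm ▸ Sl_subset_SJoinP hp
    refine ⟨m, ⟨hmLC, fun p hp => LCle_of_subset (hF hp).2 (hsub p hp), ?_⟩, ?_⟩
    · intro q hq hlb
      apply LCle_of_subset hmLC.2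
      rw [hSm]
      exact SJoinP_subset_Sl fun p hp => subset_of_LCle (hlb p hp)
    · intro b hb
      refine ⟨lc_mem_LCset _, ?_, ?_⟩
      · rintro _ ⟨p, hp, rfl⟩
        apply LCle_of_subset (lc_mem_LCset _).2
        have hss : Sl (lcSup b p) ⊆ Sl (lcSup b m) := by
          rw [Sl_lcSup, Sl_lcSup]
          exact Set.inter_subset_inter (subset_refl _) (hsub p hp)
        exact hss
      · intro q hq hlb
        apply LCle_of_subset (lc_mem_LCset _).2
        have hss : Sl (lcSup b m) ⊆ Sl q := by
          rw [Sl_lcSup, hSm]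
          rintro z ⟨hzb, hzJ⟩
          obtain ⟨M, hM, rfl⟩ := hzJ
          have hz2 : b.2 ⇨ sInf M = sInf M := (mem_Sl_iff.1 hzb).2
          rw [← hz2, himp_sInf_eq]
          apply sInf_mem_Sl
          rintro _ ⟨mm, hmm, rfl⟩
          obtain ⟨p, hp, hmp⟩ := Set.mem_iUnion₂.1 (hM hmm)
          have h1 : b.2 ⇨ mm ∈ Sl b := by
            rw [mem_Sl_iff]
            refine ⟨((mem_Sl_iff.1 hzb).1.trans (sInf_le hmm)).trans le_himp, ?_⟩
            rw [himp_himp, inf_idem]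
          have h2 : b.2 ⇨ mm ∈ Sl p := by
            rw [mem_Sl_iff]
            obtain ⟨hp1, hp2⟩ := mem_Sl_iff.1 hmp
            refine ⟨hp1.trans le_himp, ?_⟩
            rw [himp_left_comm, hp2]
          have hsq := subset_of_LCle (hlb _ ⟨p, hp, rfl⟩)
          rw [Sl_lcSup] at hsq
          exact hsq ⟨h1, h2⟩
        exact hss
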